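/- arXiv:1805.11120 — 2 statements merged into one kernel-verified Lean document; each statement's English description precedes it below -/
import Mathlib

section
/- For every admissible tensor F on V: (a) if the associated Nijenhuis tensor N̂ of F vanishes identically, then N̂⁽²⁾, N̂⁽³⁾ and N̂⁽⁴⁾ all vanish identically; (b) if N̂⁽²⁾ vanishes identically or N̂⁽³⁾ vanishes identically, then N̂⁽⁴⁾ vanishes identically. -/
open scoped RealInnerProductSpace

noncomputable section

/-- An almost paracontact almost paracomplex structure compatible with the inner
product on a real inner product space `V` of dimension `2 * n + 1`. -/
structure APAP (n : ℕ) (V : Type*) [NormedAddCommGroup V] [InnerProductSpace ℝ V] where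
  phi : V →ₗ[ℝ] V
  xi : V
  eta : V →ₗ[ℝ] ℝ
  dim_eq : Module.finrank ℝ V = 2 * n + 1
  phi_xi : phi xi = 0
  phi_phi : ∀ x : V, phi (phi x) = x - eta x • xi
  eta_phi : ∀ x : V, eta (phi x) = 0
  eta_xi : eta xi = 1
  trace_phi : LinearMap.trace ℝ V phi = 0
  compat : ∀ x y : V, ⟪phi x, phi y⟫ = ⟪x, y⟫ - eta x * eta y
  inner_xi : ∀ x : V, ⟪x, xi⟫ = eta x

variable {n : ℕ} {V : Type*} [NormedAddCommGroup V] [InnerProductSpace ℝ V]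

/-- The defining symmetries of the fundamental tensor `F`. -/
def APAP.Admissible (S : APAP n V) (F : V →ₗ[ℝ] V →ₗ[ℝ] V →ₗ[ℝ] ℝ) : Prop :=
  (∀ x y z : V, F x y z = F x z y) ∧
  (∀ x y z : V, F x y z =
    -F x (S.phi y) (S.phi z) + S.eta y * F x S.xi z + S.eta z * F x y S.xi)

/-- The Nijenhuis tensor of `F`. -/
def APAP.nij (S : APAP n V) (F : V →ₗ[ℝ] V →ₗ[ℝ] V →ₗ[ℝ] ℝ) (x y z : V) : ℝ :=
  F (S.phi x) y z - F (S.phi y) x z - F x y (S.phi z) + F y x (S.phi z)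
    + S.eta z * (F x (S.phi y) S.xi - F y (S.phi x) S.xi)

/-- The associated Nijenhuis tensor of `F`. -/
def APAP.nijA (S : APAP n V) (F : V →ₗ[ℝ] V →ₗ[ℝ] V →ₗ[ℝ] ℝ) (x y z : V) : ℝ :=
  F (S.phi x) y z + F (S.phi y) x z - F x y (S.phi z) - F y x (S.phi z)
    + S.eta z * (F x (S.phi y) S.xi + F y (S.phi x) S.xi)

/-- The tensor `N̂⁽²⁾` of `F`. -/
def APAP.nijA2 (S : APAP n V) (F : V →ₗ[ℝ] V →ₗ[ℝ] V →ₗ[ℝ] ℝ) (x y : V) : ℝ :=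
  -F x y S.xi - F y x S.xi - F (S.phi x) (S.phi y) S.xi - F (S.phi y) (S.phi x) S.xi

/-- The tensor `N̂⁽³⁾` of `F`. -/
def APAP.nijA3 (S : APAP n V) (F : V →ₗ[ℝ] V →ₗ[ℝ] V →ₗ[ℝ] ℝ) (x y : V) : ℝ :=
  F S.xi x y + F x y S.xi - F (S.phi x) (S.phi y) S.xi

/-- The tensor `N̂⁽⁴⁾` of `F`. -/
def APAP.nijA4 (S : APAP n V) (F : V →ₗ[ℝ] V →ₗ[ℝ] V →ₗ[ℝ] ℝ) (x : V) : ℝ :=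
  -F S.xi (S.phi x) S.xi

/-! Admissibility forces `F(x,ξ,ξ) = 0`. Evaluating `N̂` with `ξ` or a `φ`-image in suitable slots
gives `N̂(ξ,y,ξ) = -N̂⁽⁴⁾(y)`, `N̂(x,φy,ξ) = -N̂⁽²⁾(x,y) - η(y)F(ξ,x,ξ)` and
`N̂(ξ,φx,y) = N̂⁽³⁾(x,y) - 2η(x)F(ξ,y,ξ)`; once `N̂⁽⁴⁾ = 0`, the form `F(ξ,·,ξ)` vanishes on
`im φ` and on `ξ`, hence everywhere. For (b), `N̂⁽⁴⁾(x) = N̂⁽²⁾(φx,ξ) = -N̂⁽³⁾(φx,ξ)`. -/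

namespace APAP.Admissible

variable {S : APAP n V} {F : V →ₗ[ℝ] V →ₗ[ℝ] V →ₗ[ℝ] ℝ} (hF : S.Admissible F)
include hF

theorem apply_xi_xi (x : V) : F x S.xi S.xi = 0 := by
  have h := hF.2 x S.xi S.xi
  simp only [S.phi_xi, map_zero, S.eta_xi, one_mul] at h
  linarith

theorem nijA4_eq_nijA2 (x : V) : S.nijA4 F x = S.nijA2 F (S.phi x) S.xi := by
  simp only [APAP.nijA4, APAP.nijA2, S.phi_xi, map_zero, LinearMap.zero_apply,
    hF.apply_xi_xi]
  ring

theorem nijA4_eq_neg_nijA3 (x : V) : S.nijA4 F x = -S.nijA3 F (S.phi x) S.xi := by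
  simp only [APAP.nijA4, APAP.nijA3, S.phi_xi, map_zero, LinearMap.zero_apply,
    hF.apply_xi_xi]
  ring

theorem nijA_xi_xi (y : V) : S.nijA F S.xi y S.xi = -S.nijA4 F y := by
  simp only [APAP.nijA, APAP.nijA4, S.phi_xi, map_zero, LinearMap.zero_apply,
    S.eta_xi, hF.apply_xi_xi]
  ring

theorem apply_xi_xi_of_nijA4 (h4 : ∀ x, S.nijA4 F x = 0) (x : V) : F S.xi x S.xi = 0 := by
  have hx : x = S.phi (S.phi x) + S.eta x • S.xi := by rw [S.phi_phi]; abel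
  have h := h4 (S.phi x)
  rw [hx]
  simp only [APAP.nijA4, map_add, map_smul, LinearMap.add_apply, LinearMap.smul_apply,
    smul_eq_mul, hF.apply_xi_xi] at h ⊢
  linarith

theorem nijA_phi_xi (x y : V) :
    S.nijA F x (S.phi y) S.xi = -S.nijA2 F x y - S.eta y * F S.xi x S.xi := by
  simp only [APAP.nijA, APAP.nijA2, S.phi_phi, S.phi_xi, S.eta_xi, map_sub, map_smul,
    map_zero, LinearMap.sub_apply, LinearMap.smul_apply, smul_eq_mul, hF.apply_xi_xi]
  ring

theorem nijA_xi_phi (x y : V) :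
    S.nijA F S.xi (S.phi x) y = S.nijA3 F x y - 2 * S.eta x * F S.xi y S.xi := by
  have hadm := hF.2 S.xi x y
  simp only [APAP.nijA, APAP.nijA3, S.phi_phi, S.phi_xi, map_sub, map_smul, map_zero,
    LinearMap.sub_apply, LinearMap.smul_apply, LinearMap.zero_apply, smul_eq_mul,
    hF.apply_xi_xi, hF.1 x S.xi y, hF.1 (S.phi x) S.xi]
  linear_combination (-1) * hadm - 2 * S.eta x * hF.1 S.xi S.xi y

end APAP.Admissible

theorem statement8_general (S : APAP n V) (F : V →ₗ[ℝ] V →ₗ[ℝ] V →ₗ[ℝ] ℝ)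
    (hF : S.Admissible F) :
    ((∀ x y z : V, S.nijA F x y z = 0) →
      ((∀ x y : V, S.nijA2 F x y = 0) ∧ (∀ x y : V, S.nijA3 F x y = 0) ∧
        (∀ x : V, S.nijA4 F x = 0))) ∧
    (((∀ x y : V, S.nijA2 F x y = 0) ∨ (∀ x y : V, S.nijA3 F x y = 0)) →
      (∀ x : V, S.nijA4 F x = 0)) := by
  refine ⟨fun hN => ?_, ?_⟩
  · have h4 : ∀ x, S.nijA4 F x = 0 := fun x => by
      simpa [hN] using hF.nijA_xi_xi x
    have hξ := hF.apply_xi_xi_of_nijA4 h4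
    refine ⟨fun x y => ?_, fun x y => ?_, h4⟩
    · simpa [hN, hξ] using hF.nijA_phi_xi x y
    · simpa [hN, hξ, eq_comm] using hF.nijA_xi_phi x y
  · rintro (h | h) x
    · rw [hF.nijA4_eq_nijA2, h]
    · rw [hF.nijA4_eq_neg_nijA3, h, neg_zero]

/-- vanishing of `N̂` implies vanishing of `N̂⁽²⁾`, `N̂⁽³⁾`, `N̂⁽⁴⁾`; and
vanishing of `N̂⁽²⁾` or `N̂⁽³⁾` implies vanishing of `N̂⁽⁴⁾`. -/
theorem statement8 (hn : 1 ≤ n) (S : APAP n V) (F : V →ₗ[ℝ] V →ₗ[ℝ] V →ₗ[ℝ] ℝ)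
    (hF : S.Admissible F) :
    ((∀ x y z : V, S.nijA F x y z = 0) →
      ((∀ x y : V, S.nijA2 F x y = 0) ∧ (∀ x y : V, S.nijA3 F x y = 0) ∧
        (∀ x : V, S.nijA4 F x = 0))) ∧
    (((∀ x y : V, S.nijA2 F x y = 0) ∨ (∀ x y : V, S.nijA3 F x y = 0)) →
      (∀ x : V, S.nijA4 F x = 0)) :=
  statement8_general S F hF
end
end

section
/- An admissible tensor F on V satisfies F(x,φy,ξ) = F(y,φx,ξ) for all x,y ∈ V (i.e. the exterior derivative dη(x,y) = −F(x,φy,ξ) + F(y,φx,ξ) vanishes, so the structure 1-form η is closed) if and only if F = F₁ + F₂ + F₃ + F₄ + F₅ + F₆ + F₉ + F₁₀, the sum of its components corresponding to the classes 𝔽₁,…,𝔽₆, 𝔽₉, 𝔽₁₀. -/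
open scoped RealInnerProductSpace

noncomputable section

variable {n : ℕ} {V : Type*} [NormedAddCommGroup V] [InnerProductSpace ℝ V]

/-- The Lee form `θ` of `F` with respect to an orthonormal basis. -/
def APAP.leeTheta (S : APAP n V) (b : OrthonormalBasis (Fin (2 * n + 1)) ℝ V)
    (F : V →ₗ[ℝ] V →ₗ[ℝ] V →ₗ[ℝ] ℝ) (z : V) : ℝ :=
  ∑ i, F (b i) (b i) z

/-- The Lee form `θ*` of `F` with respect to an orthonormal basis. -/
def APAP.leeThetaStar (S : APAP n V) (b : OrthonormalBasis (Fin (2 * n + 1)) ℝ V)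
    (F : V →ₗ[ℝ] V →ₗ[ℝ] V →ₗ[ℝ] ℝ) (z : V) : ℝ :=
  ∑ i, F (b i) (S.phi (b i)) z

/-- The Lee form `ω` of `F`. -/
def APAP.leeOmega (S : APAP n V) (F : V →ₗ[ℝ] V →ₗ[ℝ] V →ₗ[ℝ] ℝ) (z : V) : ℝ :=
  F S.xi S.xi z

/-- The component `F₁` of `F`. -/
def APAP.comp1 (S : APAP n V) (b : OrthonormalBasis (Fin (2 * n + 1)) ℝ V)
    (F : V →ₗ[ℝ] V →ₗ[ℝ] V →ₗ[ℝ] ℝ) (x y z : V) : ℝ :=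
  (1 / (2 * (n : ℝ))) *
    (⟪S.phi x, S.phi y⟫ * S.leeTheta b F (S.phi (S.phi z))
      + ⟪S.phi x, S.phi z⟫ * S.leeTheta b F (S.phi (S.phi y))
      - ⟪x, S.phi y⟫ * S.leeTheta b F (S.phi z)
      - ⟪x, S.phi z⟫ * S.leeTheta b F (S.phi y))

/-- The component `F₂` of `F`. -/
def APAP.comp2 (S : APAP n V) (b : OrthonormalBasis (Fin (2 * n + 1)) ℝ V)
    (F : V →ₗ[ℝ] V →ₗ[ℝ] V →ₗ[ℝ] ℝ) (x y z : V) : ℝ :=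
  (1 / 4) * (2 * F (S.phi (S.phi x)) (S.phi (S.phi y)) (S.phi (S.phi z))
      + F (S.phi (S.phi y)) (S.phi (S.phi z)) (S.phi (S.phi x))
      + F (S.phi (S.phi z)) (S.phi (S.phi x)) (S.phi (S.phi y))
      - F (S.phi y) (S.phi z) (S.phi (S.phi x))
      - F (S.phi z) (S.phi y) (S.phi (S.phi x)))
    - S.comp1 b F x y z

/-- The component `F₃` of `F`. -/
def APAP.comp3 (S : APAP n V)
    (F : V →ₗ[ℝ] V →ₗ[ℝ] V →ₗ[ℝ] ℝ) (x y z : V) : ℝ :=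
  (1 / 4) * (2 * F (S.phi (S.phi x)) (S.phi (S.phi y)) (S.phi (S.phi z))
      - F (S.phi (S.phi y)) (S.phi (S.phi z)) (S.phi (S.phi x))
      - F (S.phi (S.phi z)) (S.phi (S.phi x)) (S.phi (S.phi y))
      + F (S.phi y) (S.phi z) (S.phi (S.phi x))
      + F (S.phi z) (S.phi y) (S.phi (S.phi x)))

/-- The component `F₄` of `F`. -/
def APAP.comp4 (S : APAP n V) (b : OrthonormalBasis (Fin (2 * n + 1)) ℝ V)
    (F : V →ₗ[ℝ] V →ₗ[ℝ] V →ₗ[ℝ] ℝ) (x y z : V) : ℝ :=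
  (S.leeTheta b F S.xi / (2 * (n : ℝ))) *
    (⟪S.phi x, S.phi y⟫ * S.eta z + ⟪S.phi x, S.phi z⟫ * S.eta y)

/-- The component `F₅` of `F`. -/
def APAP.comp5 (S : APAP n V) (b : OrthonormalBasis (Fin (2 * n + 1)) ℝ V)
    (F : V →ₗ[ℝ] V →ₗ[ℝ] V →ₗ[ℝ] ℝ) (x y z : V) : ℝ :=
  (S.leeThetaStar b F S.xi / (2 * (n : ℝ))) *
    (⟪x, S.phi y⟫ * S.eta z + ⟪x, S.phi z⟫ * S.eta y)

/-- The component `F₆` of `F`. -/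
def APAP.comp6 (S : APAP n V) (b : OrthonormalBasis (Fin (2 * n + 1)) ℝ V)
    (F : V →ₗ[ℝ] V →ₗ[ℝ] V →ₗ[ℝ] ℝ) (x y z : V) : ℝ :=
  (1 / 4) * ((F (S.phi (S.phi x)) (S.phi (S.phi y)) S.xi + F (S.phi (S.phi y)) (S.phi (S.phi x)) S.xi
        + F (S.phi x) (S.phi y) S.xi + F (S.phi y) (S.phi x) S.xi) * S.eta z
      + (F (S.phi (S.phi x)) (S.phi (S.phi z)) S.xi + F (S.phi (S.phi z)) (S.phi (S.phi x)) S.xi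
        + F (S.phi x) (S.phi z) S.xi + F (S.phi z) (S.phi x) S.xi) * S.eta y)
    - S.comp4 b F x y z - S.comp5 b F x y z

/-- The component `F₇` of `F`. -/
def APAP.comp7 (S : APAP n V)
    (F : V →ₗ[ℝ] V →ₗ[ℝ] V →ₗ[ℝ] ℝ) (x y z : V) : ℝ :=
  (1 / 4) * ((F (S.phi (S.phi x)) (S.phi (S.phi y)) S.xi - F (S.phi (S.phi y)) (S.phi (S.phi x)) S.xi
        + F (S.phi x) (S.phi y) S.xi - F (S.phi y) (S.phi x) S.xi) * S.eta z
      + (F (S.phi (S.phi x)) (S.phi (S.phi z)) S.xi - F (S.phi (S.phi z)) (S.phi (S.phi x)) S.xi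
        + F (S.phi x) (S.phi z) S.xi - F (S.phi z) (S.phi x) S.xi) * S.eta y)

/-- The component `F₈` of `F`. -/
def APAP.comp8 (S : APAP n V)
    (F : V →ₗ[ℝ] V →ₗ[ℝ] V →ₗ[ℝ] ℝ) (x y z : V) : ℝ :=
  (1 / 4) * ((F (S.phi (S.phi x)) (S.phi (S.phi y)) S.xi + F (S.phi (S.phi y)) (S.phi (S.phi x)) S.xi
        - F (S.phi x) (S.phi y) S.xi - F (S.phi y) (S.phi x) S.xi) * S.eta z
      + (F (S.phi (S.phi x)) (S.phi (S.phi z)) S.xi + F (S.phi (S.phi z)) (S.phi (S.phi x)) S.xi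
        - F (S.phi x) (S.phi z) S.xi - F (S.phi z) (S.phi x) S.xi) * S.eta y)

/-- The component `F₉` of `F`. -/
def APAP.comp9 (S : APAP n V)
    (F : V →ₗ[ℝ] V →ₗ[ℝ] V →ₗ[ℝ] ℝ) (x y z : V) : ℝ :=
  (1 / 4) * ((F (S.phi (S.phi x)) (S.phi (S.phi y)) S.xi - F (S.phi (S.phi y)) (S.phi (S.phi x)) S.xi
        - F (S.phi x) (S.phi y) S.xi + F (S.phi y) (S.phi x) S.xi) * S.eta z
      + (F (S.phi (S.phi x)) (S.phi (S.phi z)) S.xi - F (S.phi (S.phi z)) (S.phi (S.phi x)) S.xi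
        - F (S.phi x) (S.phi z) S.xi + F (S.phi z) (S.phi x) S.xi) * S.eta y)

/-- The component `F₁₀` of `F`. -/
def APAP.comp10 (S : APAP n V)
    (F : V →ₗ[ℝ] V →ₗ[ℝ] V →ₗ[ℝ] ℝ) (x y z : V) : ℝ :=
  S.eta x * F S.xi (S.phi (S.phi y)) (S.phi (S.phi z))

/-- The component `F₁₁` of `F`. -/
def APAP.comp11 (S : APAP n V)
    (F : V →ₗ[ℝ] V →ₗ[ℝ] V →ₗ[ℝ] ℝ) (x y z : V) : ℝ :=
  S.eta x * (S.eta y * S.leeOmega F z + S.eta z * S.leeOmega F y)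

/-!
Writing `x = φ²x + η(x) ξ` in each slot splits an admissible `F` into six pieces, the two
with `ξ` in both of the last slots vanishing. The sum `F₁ + ⋯ + F₆ + F₉ + F₁₀` telescopes
(`F₁`, `F₄`, `F₅` cancel against the corrections in `F₂` and `F₆`) to
`F(φ²x, φ²y, φ²z) + ½ η(z) (F(φ²x, φ²y, ξ) + F(φy, φx, ξ)) + (y ↔ z) + η(x) F(ξ, φ²y, φ²z)`,
so `F` minus this sum only involves values of `dη`, and it vanishes when `dη = 0`.
Conversely, the sum evaluated at `(x, φy, ξ)` is symmetric in `x` and `y`.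
-/

namespace APAP

variable (S : APAP n V)

theorem phi_phi_phi (x : V) : S.phi (S.phi (S.phi x)) = S.phi x := by
  rw [S.phi_phi x, map_sub, map_smul, S.phi_xi, smul_zero, sub_zero]

theorem phi_phi_xi : S.phi (S.phi S.xi) = 0 := by
  rw [S.phi_phi, S.eta_xi, one_smul, sub_self]

theorem phi_phi_add_eta_smul_xi (x : V) : S.phi (S.phi x) + S.eta x • S.xi = x := by
  rw [S.phi_phi, sub_add_cancel]

/-- `dη(x, y) = F(y, φx, ξ) - F(x, φy, ξ)` vanishes for all `x y`. -/
def EtaClosed (F : V →ₗ[ℝ] V →ₗ[ℝ] V →ₗ[ℝ] ℝ) : Prop :=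
  ∀ x y : V, F x (S.phi y) S.xi = F y (S.phi x) S.xi

variable {S} {F : V →ₗ[ℝ] V →ₗ[ℝ] V →ₗ[ℝ] ℝ}

theorem Admissible.apply_xi_xi_s16 (hF : S.Admissible F) (x : V) : F x S.xi S.xi = 0 := by
  have h := hF.2 x S.xi S.xi
  simp only [S.phi_xi, S.eta_xi, map_zero, one_mul, neg_zero, zero_add] at h
  linarith

theorem Admissible.apply_eq_decompose (hF : S.Admissible F) (x y z : V) :
    F x y z = F (S.phi (S.phi x)) (S.phi (S.phi y)) (S.phi (S.phi z))
      + S.eta z * F (S.phi (S.phi x)) (S.phi (S.phi y)) S.xi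
      + S.eta y * F (S.phi (S.phi x)) (S.phi (S.phi z)) S.xi
      + S.eta x * F S.xi (S.phi (S.phi y)) (S.phi (S.phi z))
      + S.eta x * S.eta z * F S.xi (S.phi (S.phi y)) S.xi
      + S.eta x * S.eta y * F S.xi S.xi (S.phi (S.phi z)) := by
  conv_lhs =>
    rw [← S.phi_phi_add_eta_smul_xi x, ← S.phi_phi_add_eta_smul_xi y,
      ← S.phi_phi_add_eta_smul_xi z]
  simp only [map_add, map_smul, LinearMap.add_apply, LinearMap.smul_apply, smul_eq_mul]
  linear_combination S.eta y * S.eta z * hF.apply_xi_xi_s16 (S.phi (S.phi x))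
    + S.eta x * S.eta y * S.eta z * hF.apply_xi_xi_s16 S.xi
    + S.eta y * hF.1 (S.phi (S.phi x)) S.xi (S.phi (S.phi z))

variable (S F)

theorem comp_sum_eq (b : OrthonormalBasis (Fin (2 * n + 1)) ℝ V) (x y z : V) :
    S.comp1 b F x y z + S.comp2 b F x y z + S.comp3 F x y z + S.comp4 b F x y z
      + S.comp5 b F x y z + S.comp6 b F x y z + S.comp9 F x y z + S.comp10 F x y z
      = F (S.phi (S.phi x)) (S.phi (S.phi y)) (S.phi (S.phi z))
        + S.eta z / 2 * (F (S.phi (S.phi x)) (S.phi (S.phi y)) S.xi + F (S.phi y) (S.phi x) S.xi)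
        + S.eta y / 2 * (F (S.phi (S.phi x)) (S.phi (S.phi z)) S.xi + F (S.phi z) (S.phi x) S.xi)
        + S.eta x * F S.xi (S.phi (S.phi y)) (S.phi (S.phi z)) := by
  simp only [comp1, comp2, comp3, comp4, comp5, comp6, comp9, comp10]
  ring

theorem comp_sum_apply_phi_xi (b : OrthonormalBasis (Fin (2 * n + 1)) ℝ V) (x y : V) :
    S.comp1 b F x (S.phi y) S.xi + S.comp2 b F x (S.phi y) S.xi + S.comp3 F x (S.phi y) S.xi
      + S.comp4 b F x (S.phi y) S.xi + S.comp5 b F x (S.phi y) S.xi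
      + S.comp6 b F x (S.phi y) S.xi + S.comp9 F x (S.phi y) S.xi + S.comp10 F x (S.phi y) S.xi
      = (F (S.phi (S.phi x)) (S.phi y) S.xi + F (S.phi (S.phi y)) (S.phi x) S.xi) / 2 := by
  rw [comp_sum_eq]
  simp only [S.phi_phi_phi, S.phi_phi_xi, S.eta_phi, S.eta_xi, map_zero]
  ring

variable {S F}

theorem EtaClosed.apply_phi_phi_phi_phi_xi (h : S.EtaClosed F) (x y : V) :
    F (S.phi (S.phi x)) (S.phi (S.phi y)) S.xi = F (S.phi y) (S.phi x) S.xi := by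
  rw [h, S.phi_phi_phi]

theorem EtaClosed.apply_xi_phi_phi_xi (h : S.EtaClosed F) (y : V) :
    F S.xi (S.phi (S.phi y)) S.xi = 0 := by
  rw [h, S.phi_xi, map_zero, LinearMap.zero_apply]

end APAP

theorem statement16_general (S : APAP n V)
    (b : OrthonormalBasis (Fin (2 * n + 1)) ℝ V)
    (F : V →ₗ[ℝ] V →ₗ[ℝ] V →ₗ[ℝ] ℝ) (hF : S.Admissible F) :
    (∀ x y : V, F x (S.phi y) S.xi = F y (S.phi x) S.xi) ↔
      (∀ x y z : V, F x y z = S.comp1 b F x y z + S.comp2 b F x y z + S.comp3 F x y z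
        + S.comp4 b F x y z + S.comp5 b F x y z + S.comp6 b F x y z
        + S.comp9 F x y z + S.comp10 F x y z) := by
  constructor
  · intro (h : S.EtaClosed F) x y z
    rw [S.comp_sum_eq, hF.apply_eq_decompose, h.apply_phi_phi_phi_phi_xi,
      h.apply_phi_phi_phi_phi_xi, h.apply_xi_phi_phi_xi, hF.1 S.xi S.xi, h.apply_xi_phi_phi_xi]
    ring
  · intro h x y
    rw [h, h y, S.comp_sum_apply_phi_xi, S.comp_sum_apply_phi_xi, add_comm]

/-- `dη = 0` iff `F = F₁ + F₂ + F₃ + F₄ + F₅ + F₆ + F₉ + F₁₀`. -/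
theorem statement16 (hn : 1 ≤ n) (S : APAP n V)
    (b : OrthonormalBasis (Fin (2 * n + 1)) ℝ V)
    (F : V →ₗ[ℝ] V →ₗ[ℝ] V →ₗ[ℝ] ℝ) (hF : S.Admissible F) :
    (∀ x y : V, F x (S.phi y) S.xi = F y (S.phi x) S.xi) ↔
      (∀ x y z : V, F x y z = S.comp1 b F x y z + S.comp2 b F x y z + S.comp3 F x y z
        + S.comp4 b F x y z + S.comp5 b F x y z + S.comp6 b F x y z
        + S.comp9 F x y z + S.comp10 F x y z) :=
  statement16_general S b F hF
end
end
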